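/- arXiv:1302.2740 — 3 statements merged into one kernel-verified Lean document; each statement's English description precedes it below -/
import Mathlib

section
/- Let N ≥ 2 and 1 < p < min{q, N} with p < q, set p* = pN/(N−p), p' = p/(p−1), q' = q/(q−1), and assume 1 < p*q'/p'. Then for every α ∈ (1, p*q'/p'] there exists a constant C > 0 such that for every u ∈ C_c^∞(ℝ^N): ‖u‖_{L^{p*}(ℝ^N)} ≤ C(‖u‖_{L^α(ℝ^N)} + ‖∇u‖_{p,q}). -/
open MeasureTheory Filter Set
open scoped ENNReal NNReal

/-- The norm of the space `L^p + L^q` (with respect to the measure `μ`):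
the infimum of `‖v‖_p + ‖w‖_q` over all decompositions `f = v + w` a.e. with
`v ∈ L^p`, `w ∈ L^q` (with the convention `inf ∅ = +∞`). -/
noncomputable def sumLpNorm {α : Type*} {E : Type*} [MeasurableSpace α] [NormedAddCommGroup E]
    (p q : ℝ≥0∞) (μ : Measure α) (f : α → E) : ℝ≥0∞ :=
  sInf {r : ℝ≥0∞ | ∃ v w : α → E, f =ᵐ[μ] v + w ∧ MemLp v p μ ∧ MemLp w q μ ∧
    r = eLpNorm v p μ + eLpNorm w q μ}


noncomputable def sChi (s : ℝ) : ℝ := Real.smoothTransition (4 * s ^ 2 - 1)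

lemma sChi_continuous : Continuous sChi :=
  Real.smoothTransition.continuous.comp (by fun_prop)

lemma sChi_nonneg (s : ℝ) : 0 ≤ sChi s := Real.smoothTransition.nonneg _
lemma sChi_le_one (s : ℝ) : sChi s ≤ 1 := Real.smoothTransition.le_one _

lemma sChi_eq_zero {s : ℝ} (h : |s| ≤ 1/2) : sChi s = 0 := by
  apply Real.smoothTransition.zero_of_nonpos
  nlinarith [sq_abs s, abs_nonneg s]

lemma sChi_eq_one {s : ℝ} (h : 1 ≤ |s|) : sChi s = 1 := by
  apply Real.smoothTransition.one_of_one_le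
  nlinarith [sq_abs s, abs_nonneg s]

noncomputable def sPhi (t : ℝ) : ℝ := ∫ s in (0:ℝ)..t, sChi s

lemma sPhi_hasDerivAt (t : ℝ) : HasDerivAt sPhi (sChi t) t :=
  (sChi_continuous.integral_hasStrictDerivAt 0 t).hasDerivAt

lemma sPhi_contDiff : ContDiff ℝ 1 sPhi := by
  rw [contDiff_one_iff_deriv]
  have hd : deriv sPhi = sChi := funext fun t => (sPhi_hasDerivAt t).deriv
  exact ⟨fun t => (sPhi_hasDerivAt t).differentiableAt, by rw [hd]; exact sChi_continuous⟩

lemma sPhi_zero : sPhi 0 = 0 := intervalIntegral.integral_same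

lemma sub_sPhi (t : ℝ) : t - sPhi t = ∫ s in (0:ℝ)..t, (1 - sChi s) := by
  rw [intervalIntegral.integral_sub intervalIntegrable_const
    (sChi_continuous.intervalIntegrable 0 t), intervalIntegral.integral_const, sPhi]
  simp

lemma abs_sub_sPhi_le_abs (t : ℝ) : |t - sPhi t| ≤ |t| := by
  rw [sub_sPhi]
  have := intervalIntegral.norm_integral_le_of_norm_le_const
    (C := 1) (f := fun s => 1 - sChi s) (a := 0) (b := t) ?_
  · simpa using this
  · intro s _
    show ‖1 - sChi s‖ ≤ 1
    rw [Real.norm_eq_abs, abs_le]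
    exact ⟨by nlinarith [sChi_le_one s], by nlinarith [sChi_nonneg s]⟩

lemma one_sub_sChi_integrable : MeasureTheory.Integrable (fun s => 1 - sChi s) := by
  apply Continuous.integrable_of_hasCompactSupport (continuous_const.sub sChi_continuous)
  apply HasCompactSupport.intro (isCompact_Icc (a := (-1:ℝ)) (b := 1))
  intro s hs
  have h1 : 1 ≤ |s| := by
    rw [mem_Icc] at hs
    rw [le_abs]
    rcases not_and_or.mp hs with h | h
    · right; linarith [not_le.mp h]
    · left; linarith [not_le.mp h]
  simp [sChi_eq_one h1]

lemma integral_one_sub_sChi_le : ∫ s, (1 - sChi s) ≤ 2 := by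
  have hmono : ∀ s : ℝ, 1 - sChi s ≤ (Icc (-1:ℝ) 1).indicator (fun _ => (1:ℝ)) s := by
    intro s
    by_cases hs : s ∈ Icc (-1:ℝ) 1
    · rw [indicator_of_mem hs]
      linarith [sChi_nonneg s]
    · rw [indicator_of_notMem hs]
      have h1 : 1 ≤ |s| := by
        rw [mem_Icc] at hs
        rw [le_abs]
        rcases not_and_or.mp hs with h | h
        · right; linarith [not_le.mp h]
        · left; linarith [not_le.mp h]
      simp [sChi_eq_one h1]
  calc ∫ s, (1 - sChi s) ≤ ∫ s, (Icc (-1:ℝ) 1).indicator (fun _ => (1:ℝ)) s := by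
        apply integral_mono one_sub_sChi_integrable _ hmono
        rw [integrable_indicator_iff measurableSet_Icc]
        exact integrableOn_const (by simp)
    _ = 2 := by
        rw [integral_indicator measurableSet_Icc]
        simp [Real.volume_Icc]
        norm_num

lemma abs_sub_sPhi_le_two (t : ℝ) : |t - sPhi t| ≤ 2 := by
  rw [sub_sPhi]
  have hnn : 0 ≤ᵐ[(volume : Measure ℝ)] fun s => 1 - sChi s :=
    Filter.Eventually.of_forall fun s => show (0:ℝ) ≤ 1 - sChi s by linarith [sChi_le_one s]
  rcases le_total 0 t with ht | ht
  · rw [intervalIntegral.integral_of_le ht, abs_of_nonneg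
      (setIntegral_nonneg measurableSet_Ioc fun s _ => by linarith [sChi_le_one s])]
    calc ∫ s in Ioc 0 t, (1 - sChi s) ≤ ∫ s, (1 - sChi s) :=
          setIntegral_le_integral one_sub_sChi_integrable hnn
      _ ≤ 2 := integral_one_sub_sChi_le
  · rw [intervalIntegral.integral_symm, intervalIntegral.integral_of_le ht, abs_neg, abs_of_nonneg
      (setIntegral_nonneg measurableSet_Ioc fun s _ => by linarith [sChi_le_one s])]
    calc ∫ s in Ioc t 0, (1 - sChi s) ≤ ∫ s, (1 - sChi s) :=
          setIntegral_le_integral one_sub_sChi_integrable hnn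
      _ ≤ 2 := integral_one_sub_sChi_le

lemma pow_bound {a t ps α : ℝ} (hα : 0 < α) (hαps : α ≤ ps) (ha1 : |a| ≤ |t|) (ha2 : |a| ≤ 2) :
    |a| ^ ps ≤ 2 ^ (ps - α) * |t| ^ α := by
  have h1 : |a| ^ ps = |a| ^ (ps - α) * |a| ^ α := by
    rw [← Real.rpow_add_of_nonneg (abs_nonneg a) (by linarith) hα.le]
    ring_nf
  rw [h1]
  exact mul_le_mul (Real.rpow_le_rpow (abs_nonneg a) ha2 (by linarith))
    (Real.rpow_le_rpow (abs_nonneg a) ha1 hα.le) (Real.rpow_nonneg (abs_nonneg a) α)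
    (Real.rpow_nonneg (by norm_num) _)

private lemma key (N : ℕ) (hN : 2 ≤ N) (p q ps α : ℝ) (hp : 1 < p) (hpq : p < q) (hpN : (p:ℝ) < N)
    (hps : ps = p * N / (N - p)) (hα : 1 < α) (hαps : α ≤ ps) :
    ∃ C : ℝ≥0∞, C ≠ ∞ ∧
      ∀ (u : EuclideanSpace ℝ (Fin N) → ℝ)
        (v w : EuclideanSpace ℝ (Fin N) → EuclideanSpace ℝ (Fin N)),
      ContDiff ℝ (⊤ : ℕ∞) u → HasCompactSupport u →
      gradient u =ᵐ[volume] v + w →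
      AEStronglyMeasurable v volume → AEStronglyMeasurable w volume →
      eLpNorm u (ENNReal.ofReal α) volume ≤ 1 →
      eLpNorm v (ENNReal.ofReal p) volume ≤ 1 →
      eLpNorm w (ENNReal.ofReal q) volume ≤ 1 →
      eLpNorm u (ENNReal.ofReal ps) volume ≤ C := by
  have hp0 : (0:ℝ) < p := by linarith
  have hq0 : (0:ℝ) < q := by linarith
  have hα0 : (0:ℝ) < α := by linarith
  have hps1 : (1:ℝ) < ps := lt_of_lt_of_le hα hαps
  have hps0 : (0:ℝ) < ps := by linarith
  have hNp : (0:ℝ) < (N:ℝ) - p := by linarith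
  have hpq' : (0:ℝ) ≤ 1/p - 1/q := by
    rw [sub_nonneg]
    exact one_div_le_one_div_of_le hp0 hpq.le
  set E := EuclideanSpace ℝ (Fin N)
  set K₁ : ℝ≥0∞ := ENNReal.ofReal (2 ^ (ps - α)) ^ (1/ps) with hK₁
  set K₂ : ℝ≥0∞ := (ENNReal.ofReal 2 ^ α) ^ (1/p - 1/q) with hK₂
  set C₂ : ℝ≥0 :=
    eLpNormLESNormFDerivOfEqInnerConst (volume : Measure E) p.toNNReal with hC₂
  refine ⟨K₁ + C₂ * (1 + K₂), ?_, ?_⟩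
  · apply ENNReal.add_ne_top.mpr
    constructor
    · exact ENNReal.rpow_ne_top_of_nonneg (by positivity) ENNReal.ofReal_ne_top
    · apply ENNReal.mul_ne_top ENNReal.coe_ne_top
      apply ENNReal.add_ne_top.mpr
      exact ⟨ENNReal.one_ne_top, ENNReal.rpow_ne_top_of_nonneg hpq'
        (ENNReal.rpow_ne_top_of_nonneg hα0.le ENNReal.ofReal_ne_top)⟩
  intro u v w hu h2u hvw hvm hwm hu1 hv1 hw1
  have hαne0 : ENNReal.ofReal α ≠ 0 := by simp [hα0]
  have hint_u : ∫⁻ x, (‖u x‖₊ : ℝ≥0∞) ^ α ∂volume ≤ 1 := by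
    rw [eLpNorm_eq_lintegral_rpow_enorm_toReal hαne0 ENNReal.ofReal_ne_top,
      ENNReal.toReal_ofReal hα0.le] at hu1
    have h2 := ENNReal.rpow_le_rpow hu1 hα0.le
    rwa [← ENNReal.rpow_mul, one_div, inv_mul_cancel₀ hα0.ne', ENNReal.rpow_one,
      ENNReal.one_rpow] at h2
  set Ω : Set E := {x : E | 1/2 ≤ |u x|} with hΩ
  have hΩmeas : MeasurableSet Ω :=
    (isClosed_le continuous_const hu.continuous.abs).measurableSet
  have hΩvol : volume Ω ≤ ENNReal.ofReal 2 ^ α := by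
    have hKpos : (0:ℝ≥0∞) < ENNReal.ofReal 2 ^ α :=
      ENNReal.rpow_pos (by simp) ENNReal.ofReal_ne_top
    have hsub : Ω ⊆ {x : E | (ENNReal.ofReal 2 ^ α)⁻¹ ≤ (‖u x‖₊ : ℝ≥0∞) ^ α} := by
      intro x hx
      have hx' : (1:ℝ)/2 ≤ |u x| := hx
      have h1 : ((1:ℝ)/2) ^ α ≤ |u x| ^ α :=
        Real.rpow_le_rpow (by norm_num) hx' hα0.le
      have h2 : (ENNReal.ofReal 2 ^ α)⁻¹ = ENNReal.ofReal (((1:ℝ)/2) ^ α) := by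
        rw [← ENNReal.inv_rpow, ← ENNReal.ofReal_inv_of_pos (by norm_num : (0:ℝ) < 2),
          ENNReal.ofReal_rpow_of_nonneg (by norm_num) hα0.le]
        norm_num
      show (ENNReal.ofReal 2 ^ α)⁻¹ ≤ (‖u x‖₊ : ℝ≥0∞) ^ α
      rw [h2, ← enorm_eq_nnnorm, Real.enorm_eq_ofReal_abs, ENNReal.ofReal_rpow_of_nonneg (abs_nonneg _) hα0.le]
      exact ENNReal.ofReal_le_ofReal h1
    have cheb := mul_meas_ge_le_lintegral₀
      (μ := (volume : Measure E)) (f := fun x => (‖u x‖₊ : ℝ≥0∞) ^ α)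
      ((hu.continuous.measurable.nnnorm.coe_nnreal_ennreal.pow_const α).aemeasurable)
      ((ENNReal.ofReal 2 ^ α)⁻¹)
    have h3 : (ENNReal.ofReal 2 ^ α)⁻¹ * volume Ω ≤ 1 :=
      le_trans (mul_le_mul_right (measure_mono hsub) _) (le_trans cheb hint_u)
    calc volume Ω = (ENNReal.ofReal 2 ^ α) * ((ENNReal.ofReal 2 ^ α)⁻¹ * volume Ω) := by
          rw [← mul_assoc, ENNReal.mul_inv_cancel hKpos.ne'
            (ENNReal.rpow_ne_top_of_nonneg hα0.le ENNReal.ofReal_ne_top), one_mul]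
      _ ≤ (ENNReal.ofReal 2 ^ α) * 1 := mul_le_mul_right h3 _
      _ = ENNReal.ofReal 2 ^ α := mul_one _
  -- Part A : the low part
  have hPSne0 : ENNReal.ofReal ps ≠ 0 := by simp [hps0]
  have hA : eLpNorm (fun x => u x - sPhi (u x)) (ENNReal.ofReal ps) volume ≤ K₁ := by
    rw [eLpNorm_eq_lintegral_rpow_enorm_toReal hPSne0 ENNReal.ofReal_ne_top,
      ENNReal.toReal_ofReal hps0.le]
    have hptw : ∀ x : E, (‖u x - sPhi (u x)‖₊ : ℝ≥0∞) ^ ps ≤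
        ENNReal.ofReal (2 ^ (ps - α)) * (‖u x‖₊ : ℝ≥0∞) ^ α := by
      intro x
      rw [← enorm_eq_nnnorm, ← enorm_eq_nnnorm, Real.enorm_eq_ofReal_abs, Real.enorm_eq_ofReal_abs,
        ENNReal.ofReal_rpow_of_nonneg (abs_nonneg _) hps0.le,
        ENNReal.ofReal_rpow_of_nonneg (abs_nonneg _) hα0.le,
        ← ENNReal.ofReal_mul (by positivity)]
      exact ENNReal.ofReal_le_ofReal
        (pow_bound hα0 hαps (abs_sub_sPhi_le_abs (u x)) (abs_sub_sPhi_le_two (u x)))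
    calc (∫⁻ x, (‖u x - sPhi (u x)‖₊ : ℝ≥0∞) ^ ps ∂volume) ^ (1/ps)
        ≤ (∫⁻ x, ENNReal.ofReal (2 ^ (ps - α)) * (‖u x‖₊ : ℝ≥0∞) ^ α ∂volume) ^ (1/ps) :=
          ENNReal.rpow_le_rpow (lintegral_mono hptw) (by positivity)
      _ = (ENNReal.ofReal (2 ^ (ps - α)) * ∫⁻ x, (‖u x‖₊ : ℝ≥0∞) ^ α ∂volume) ^ (1/ps) := by
          rw [lintegral_const_mul' _ _ ENNReal.ofReal_ne_top]
      _ ≤ (ENNReal.ofReal (2 ^ (ps - α)) * 1) ^ (1/ps) :=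
          ENNReal.rpow_le_rpow (mul_le_mul_right hint_u _) (by positivity)
      _ = K₁ := by rw [mul_one]
  -- Part B : the high part via Gagliardo-Nirenberg-Sobolev
  set φu : E → ℝ := sPhi ∘ u with hφu
  have husmooth : ContDiff ℝ 1 u := hu.of_le (by simp)
  have hcomp1 : ContDiff ℝ 1 φu := sPhi_contDiff.comp husmooth
  have hcomp2 : HasCompactSupport φu := h2u.comp_left sPhi_zero
  have hrank : Module.finrank ℝ E = N := finrank_euclideanSpace_fin
  have hP1 : (1:ℝ≥0) ≤ p.toNNReal := by
    rw [← Real.toNNReal_one]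
    exact Real.toNNReal_mono hp.le
  have hn0 : 0 < Module.finrank ℝ E := by rw [hrank]; omega
  have hp' : ((ps.toNNReal : ℝ))⁻¹ = ((p.toNNReal : ℝ))⁻¹ - ((Module.finrank ℝ E : ℝ))⁻¹ := by
    rw [hrank, Real.coe_toNNReal _ hps0.le, Real.coe_toNNReal _ hp0.le, hps]
    have hN0 : (0:ℝ) < (N:ℝ) := by positivity
    field_simp
  have hGNS := eLpNorm_le_eLpNorm_fderiv_of_eq_inner (μ := (volume : Measure E))
    (u := φu) hcomp1 hcomp2 hP1 hn0 hp'
  have hcoe_ps : ((ps.toNNReal : ℝ≥0∞)) = ENNReal.ofReal ps := rfl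
  have hcoe_p : ((p.toNNReal : ℝ≥0∞)) = ENNReal.ofReal p := rfl
  rw [hcoe_ps, hcoe_p] at hGNS
  -- fderiv formula
  have hfd : ∀ x : E, fderiv ℝ φu x = sChi (u x) • fderiv ℝ u x := fun x =>
    ((sPhi_hasDerivAt (u x)).comp_hasFDerivAt x (husmooth.differentiable one_ne_zero x).hasFDerivAt).fderiv
  -- a.e. pointwise bound on the derivative
  have hae : ∀ᵐ x ∂(volume : Measure E), ‖fderiv ℝ φu x‖ ≤
      ‖(fun y => ‖v y‖ + ‖Ω.indicator w y‖) x‖ := by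
    filter_upwards [hvw] with x hx
    have hxnn : (0:ℝ) ≤ ‖v x‖ + ‖Ω.indicator w x‖ := by positivity
    rw [Real.norm_eq_abs, abs_of_nonneg hxnn]
    by_cases hmem : x ∈ Ω
    · have h1 : ‖fderiv ℝ φu x‖ ≤ ‖fderiv ℝ u x‖ := by
        rw [hfd x, norm_smul, Real.norm_eq_abs, abs_of_nonneg (sChi_nonneg _)]
        exact mul_le_of_le_one_left (norm_nonneg _) (sChi_le_one _)
      have h2 : ‖fderiv ℝ u x‖ = ‖gradient u x‖ := by
        rw [gradient, LinearIsometryEquiv.norm_map]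
      have h3 : gradient u x = v x + w x := hx
      rw [indicator_of_mem hmem]
      calc ‖fderiv ℝ φu x‖ ≤ ‖fderiv ℝ u x‖ := h1
        _ = ‖v x + w x‖ := by rw [h2, h3]
        _ ≤ ‖v x‖ + ‖w x‖ := norm_add_le _ _
    · have hlt : |u x| ≤ 1/2 := le_of_lt (not_le.mp hmem)
      rw [hfd x, sChi_eq_zero hlt, zero_smul, norm_zero]
      exact hxnn
  -- indicator bound
  have hqne0 : ENNReal.ofReal q ≠ 0 := by simp [hq0]
  have hind : eLpNorm (Ω.indicator w) (ENNReal.ofReal p) volume ≤ K₂ := by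
    rw [eLpNorm_indicator_eq_eLpNorm_restrict hΩmeas]
    have hcomp := eLpNorm_le_eLpNorm_mul_rpow_measure_univ
      (μ := (volume : Measure E).restrict Ω) (f := w)
      (ENNReal.ofReal_le_ofReal hpq.le) (hwm.restrict)
    rw [Measure.restrict_apply_univ, ENNReal.toReal_ofReal hp0.le,
      ENNReal.toReal_ofReal hq0.le] at hcomp
    calc eLpNorm w (ENNReal.ofReal p) (volume.restrict Ω)
        ≤ eLpNorm w (ENNReal.ofReal q) (volume.restrict Ω) * volume Ω ^ (1/p - 1/q) := hcomp
      _ ≤ 1 * (ENNReal.ofReal 2 ^ α) ^ (1/p - 1/q) := by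
          gcongr
          exact le_trans (eLpNorm_mono_measure _ Measure.restrict_le_self) hw1
      _ = K₂ := by rw [one_mul]
  -- bound the derivative term
  have hone_le_p : (1:ℝ≥0∞) ≤ ENNReal.ofReal p := ENNReal.one_le_ofReal.mpr hp.le
  have hone_le_ps : (1:ℝ≥0∞) ≤ ENNReal.ofReal ps := ENNReal.one_le_ofReal.mpr hps1.le
  have hindm : AEStronglyMeasurable (Ω.indicator w) volume := hwm.indicator hΩmeas
  have hderiv_bound : eLpNorm (fderiv ℝ φu) (ENNReal.ofReal p) volume ≤ 1 + K₂ := by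
    calc eLpNorm (fderiv ℝ φu) (ENNReal.ofReal p) volume
        ≤ eLpNorm (fun y => ‖v y‖ + ‖Ω.indicator w y‖) (ENNReal.ofReal p) volume :=
          eLpNorm_mono_ae hae
      _ ≤ eLpNorm (fun y => ‖v y‖) (ENNReal.ofReal p) volume +
          eLpNorm (fun y => ‖Ω.indicator w y‖) (ENNReal.ofReal p) volume :=
          eLpNorm_add_le hvm.norm hindm.norm hone_le_p
      _ = eLpNorm v (ENNReal.ofReal p) volume +
          eLpNorm (Ω.indicator w) (ENNReal.ofReal p) volume := by
          rw [eLpNorm_norm, eLpNorm_norm]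
      _ ≤ 1 + K₂ := add_le_add hv1 hind
  -- assemble
  have hdecomp : u = (fun x => u x - sPhi (u x)) + φu := by
    funext x
    simp [hφu, Function.comp]
  have h1m : AEStronglyMeasurable (fun x => u x - sPhi (u x)) (volume : Measure E) :=
    (hu.continuous.sub (sPhi_contDiff.continuous.comp hu.continuous)).aestronglyMeasurable
  have h2m : AEStronglyMeasurable φu (volume : Measure E) := hcomp1.continuous.aestronglyMeasurable
  calc eLpNorm u (ENNReal.ofReal ps) volume
      = eLpNorm ((fun x => u x - sPhi (u x)) + φu) (ENNReal.ofReal ps) volume := by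
        rw [← hdecomp]
    _ ≤ eLpNorm (fun x => u x - sPhi (u x)) (ENNReal.ofReal ps) volume +
        eLpNorm φu (ENNReal.ofReal ps) volume := eLpNorm_add_le h1m h2m hone_le_ps
    _ ≤ K₁ + C₂ * (1 + K₂) := by
        apply add_le_add hA
        calc eLpNorm φu (ENNReal.ofReal ps) volume
            ≤ C₂ * eLpNorm (fderiv ℝ φu) (ENNReal.ofReal p) volume := hGNS
          _ ≤ C₂ * (1 + K₂) := mul_le_mul_right hderiv_bound _


/-- for `N ≥ 2`, `1 < p < min {q, N}`, `p* = pN/(N-p)`, and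
`α ∈ (1, p* q'/p']` (assuming `1 < p* q'/p'`), there is `C > 0` with
`‖u‖_{p*} ≤ C (‖u‖_α + ‖∇u‖_{p,q})` for all `u ∈ C_c^∞(ℝ^N)`. -/
theorem sobolev_type_embedding
    (N : ℕ) (hN : 2 ≤ N) (p q : ℝ) (hp : 1 < p) (hpq : p < q) (hpN : p < N)
    (hcond : 1 < (p * N / (N - p)) * (q / (q - 1)) / (p / (p - 1)))
    (α : ℝ) (hα : 1 < α) (hαle : α ≤ (p * N / (N - p)) * (q / (q - 1)) / (p / (p - 1))) :
    ∃ C : ℝ≥0, 0 < C ∧ ∀ u : EuclideanSpace ℝ (Fin N) → ℝ,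
      ContDiff ℝ (⊤ : ℕ∞) u → HasCompactSupport u →
      eLpNorm u (ENNReal.ofReal (p * N / (N - p))) volume ≤
        C * (eLpNorm u (ENNReal.ofReal α) volume +
          sumLpNorm (ENNReal.ofReal p) (ENNReal.ofReal q) volume (gradient u)) := by
  have hp0 : (0:ℝ) < p := by linarith
  have hNp : (0:ℝ) < (N:ℝ) - p := by
    have : (p:ℝ) < (N:ℝ) := hpN
    linarith
  have hα0 : (0:ℝ) < α := by linarith
  have hps0 : (0:ℝ) ≤ p * N / (N - p) := by positivity
  have hαps : α ≤ p * N / (N - p) := by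
    refine le_trans hαle ?_
    rw [div_le_iff₀ (div_pos hp0 (by linarith))]
    have h1 : q / (q - 1) ≤ p / (p - 1) := by
      rw [div_le_div_iff₀ (by linarith) (by linarith)]
      nlinarith
    nlinarith [mul_le_mul_of_nonneg_left h1 hps0]
  obtain ⟨C0, hC0top, hkey⟩ := key N hN p q (p * N / (N - p)) α hp hpq hpN rfl hα hαps
  set ps : ℝ := p * N / (N - p) with hps
  set C : ℝ≥0 := C0.toNNReal + 1 with hC
  have hC0le : C0 ≤ (C : ℝ≥0∞) := by
    rw [hC, ENNReal.coe_add, ← ENNReal.coe_toNNReal hC0top]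
    exact le_self_add
  have hCne0 : (C : ℝ≥0∞) ≠ 0 := by simp [hC]
  refine ⟨C, by positivity, ?_⟩
  intro u hu h2u
  set A := eLpNorm u (ENNReal.ofReal α) volume with hA
  have hαne0 : ENNReal.ofReal α ≠ 0 := by simp [hα0]
  set S : Set ℝ≥0∞ := {r : ℝ≥0∞ | ∃ v w : EuclideanSpace ℝ (Fin N) → EuclideanSpace ℝ (Fin N),
    gradient u =ᵐ[volume] v + w ∧ MemLp v (ENNReal.ofReal p) volume ∧
    MemLp w (ENNReal.ofReal q) volume ∧
    r = eLpNorm v (ENNReal.ofReal p) volume + eLpNorm w (ENNReal.ofReal q) volume} with hS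
  have hsum : sumLpNorm (ENNReal.ofReal p) (ENNReal.ofReal q) volume (gradient u) = sInf S := rfl
  have hAfin : A ≠ ∞ :=
    (hu.continuous.memLp_of_hasCompactSupport (p := ENNReal.ofReal α) h2u).2.ne
  have hmain : ∀ r ∈ S, eLpNorm u (ENNReal.ofReal ps) volume ≤ C0 * (A + r) := by
    rintro r ⟨v, w, hvw, hv, hw, rfl⟩
    set M := A + (eLpNorm v (ENNReal.ofReal p) volume + eLpNorm w (ENNReal.ofReal q) volume)
      with hM
    have hMtop : M ≠ ∞ := by
      rw [hM]
      exact ENNReal.add_ne_top.mpr ⟨hAfin, ENNReal.add_ne_top.mpr ⟨hv.2.ne, hw.2.ne⟩⟩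
    by_cases hM0 : M = 0
    · have hA0 : A = 0 := by
        have := le_self_add (a := A)
          (b := eLpNorm v (ENNReal.ofReal p) volume + eLpNorm w (ENNReal.ofReal q) volume)
        rw [← hM, hM0] at this
        exact le_antisymm this zero_le
      have hu0 : u =ᵐ[volume] 0 :=
        (eLpNorm_eq_zero_iff hu.continuous.aestronglyMeasurable hαne0).mp hA0
      rw [eLpNorm_congr_ae hu0, eLpNorm_zero]
      exact zero_le
    · set c : ℝ := M.toReal with hc
      have hc0 : 0 < c := ENNReal.toReal_pos hM0 hMtop
      have hcoe : ((‖(c⁻¹ : ℝ)‖₊ : ℝ≥0) : ℝ≥0∞) = M⁻¹ := by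
        rw [← enorm_eq_nnnorm, Real.enorm_eq_ofReal_abs, abs_of_pos (by positivity),
          ENNReal.ofReal_inv_of_pos hc0, hc, ENNReal.ofReal_toReal hMtop]
      have hudiff : Differentiable ℝ u := hu.differentiable (by simp)
      have hgrad : ∀ x, gradient (c⁻¹ • u) x = c⁻¹ • gradient u x := by
        intro x
        have hfd : fderiv ℝ (fun y => c⁻¹ • u y) x = c⁻¹ • fderiv ℝ u x :=
          fderiv_const_smul (hudiff x) c⁻¹
        rw [gradient, gradient, show (c⁻¹ • u) = (fun y => c⁻¹ • u y) from rfl, hfd, _root_.map_smul]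
      have hvw' : gradient (c⁻¹ • u) =ᵐ[volume] (c⁻¹ • v) + (c⁻¹ • w) := by
        filter_upwards [hvw] with x hx
        rw [hgrad x, hx]
        simp [smul_add]
      have hsc : ∀ (f : EuclideanSpace ℝ (Fin N) → EuclideanSpace ℝ (Fin N)) (r : ℝ≥0∞),
          eLpNorm (c⁻¹ • f) r volume = M⁻¹ * eLpNorm f r volume := by
        intro f r
        rw [eLpNorm_const_smul, enorm_eq_nnnorm, hcoe]
      have hscu : ∀ (r : ℝ≥0∞), eLpNorm (c⁻¹ • u) r volume = M⁻¹ * eLpNorm u r volume := by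
        intro r
        rw [eLpNorm_const_smul, enorm_eq_nnnorm, hcoe]
      have hle1 : ∀ X : ℝ≥0∞, X ≤ M → M⁻¹ * X ≤ 1 := by
        intro X hX
        calc M⁻¹ * X ≤ M⁻¹ * M := mul_le_mul_right hX _
          _ = 1 := ENNReal.inv_mul_cancel hM0 hMtop
      have h1 : eLpNorm (c⁻¹ • u) (ENNReal.ofReal α) volume ≤ 1 := by
        rw [hscu]; exact hle1 _ le_self_add
      have h2 : eLpNorm (c⁻¹ • v) (ENNReal.ofReal p) volume ≤ 1 := by
        rw [hsc]
        exact hle1 _ (le_trans le_self_add (le_add_self))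
      have h3 : eLpNorm (c⁻¹ • w) (ENNReal.ofReal q) volume ≤ 1 := by
        rw [hsc]
        exact hle1 _ (le_trans le_add_self (le_add_self))
      have hcs : HasCompactSupport (c⁻¹ • u) := by
        have : (c⁻¹ • u) = (fun t : ℝ => c⁻¹ * t) ∘ u := rfl
        rw [this]
        exact h2u.comp_left (by simp)
      have := hkey (c⁻¹ • u) (c⁻¹ • v) (c⁻¹ • w) (by exact hu.const_smul c⁻¹) hcs hvw'
        (by exact hv.1.const_smul c⁻¹) (by exact hw.1.const_smul c⁻¹) h1 h2 h3
      rw [hscu] at this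
      calc eLpNorm u (ENNReal.ofReal ps) volume
          = M * (M⁻¹ * eLpNorm u (ENNReal.ofReal ps) volume) := by
            rw [← mul_assoc, ENNReal.mul_inv_cancel hM0 hMtop, one_mul]
        _ ≤ M * C0 := mul_le_mul_right this _
        _ = C0 * M := mul_comm _ _
        _ = C0 * (A + (eLpNorm v (ENNReal.ofReal p) volume
            + eLpNorm w (ENNReal.ofReal q) volume)) := by rw [hM]
  rw [hsum]
  refine ENNReal.le_of_forall_pos_le_add fun ε hε hb => ?_
  have hSinf_ne : sInf S ≠ ∞ := by
    intro htop
    rw [htop, add_top, ENNReal.mul_top hCne0] at hb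
    exact lt_irrefl _ hb
  have hδ0 : (ε : ℝ≥0∞) / C ≠ 0 := by
    simp [ENNReal.div_eq_zero_iff, hε.ne', ENNReal.coe_ne_top]
  obtain ⟨r, hrS, hrlt⟩ := sInf_lt_iff.mp (ENNReal.lt_add_right hSinf_ne hδ0)
  calc eLpNorm u (ENNReal.ofReal ps) volume ≤ C0 * (A + r) := hmain r hrS
    _ ≤ (C : ℝ≥0∞) * (A + r) := mul_le_mul_left hC0le _
    _ ≤ (C : ℝ≥0∞) * (A + (sInf S + (ε : ℝ≥0∞) / C)) := by
        gcongr

    _ = (C : ℝ≥0∞) * (A + sInf S) + (C : ℝ≥0∞) * ((ε : ℝ≥0∞) / C) := by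
        rw [← add_assoc, mul_add]
    _ ≤ (C : ℝ≥0∞) * (A + sInf S) + ε := by
        gcongr
        exact ENNReal.mul_div_le
end

section
/- Let N ≥ 2 and 1 < p < q < N. There exists a constant C > 0 such that for every radially symmetric u ∈ C_c^∞(ℝ^N) and every x ∈ ℝ^N with |x| ≥ 1: |u(x)| ≤ C |x|^{−(N−q)/q} ‖∇u‖_{p,q}. -/
open MeasureTheory Filter Set
open scoped ENNReal NNReal

section Auxiliary

open Metric

lemma polar_lintegral (N : ℕ) (hN : 2 ≤ N) (f : ℝ → ℝ≥0∞) (hf : Measurable f) :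
    ∫⁻ x : EuclideanSpace ℝ (Fin N), f ‖x‖ =
      (volume : Measure (EuclideanSpace ℝ (Fin N))).toSphere univ *
        ∫⁻ y in Ioi (0:ℝ), ENNReal.ofReal (y ^ (N - 1)) * f y := by
  haveI : Nonempty (Fin N) := ⟨⟨0, by omega⟩⟩
  have hdim : Module.finrank ℝ (EuclideanSpace ℝ (Fin N)) = N := finrank_euclideanSpace_fin
  have h1 : ∫⁻ x : ({0}ᶜ : Set (EuclideanSpace ℝ (Fin N))), f ‖(x : EuclideanSpace ℝ (Fin N))‖
        ∂((volume : Measure (EuclideanSpace ℝ (Fin N))).comap Subtype.val)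
      = ∫⁻ x : EuclideanSpace ℝ (Fin N), f ‖x‖ := by
    rw [lintegral_subtype_comap (measurableSet_singleton (0:EuclideanSpace ℝ (Fin N))).compl
      (fun a => f ‖a‖), restrict_compl_singleton]
  have h2 : ∫⁻ x : ({0}ᶜ : Set (EuclideanSpace ℝ (Fin N))), f ‖(x : EuclideanSpace ℝ (Fin N))‖
        ∂((volume : Measure (EuclideanSpace ℝ (Fin N))).comap Subtype.val)
      = ∫⁻ z : sphere (0:EuclideanSpace ℝ (Fin N)) 1 × Ioi (0:ℝ), f z.2
          ∂((volume : Measure (EuclideanSpace ℝ (Fin N))).toSphere.prod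
            (.volumeIoiPow (Module.finrank ℝ (EuclideanSpace ℝ (Fin N)) - 1))) := by
    rw [← (Measure.measurePreserving_homeomorphUnitSphereProd
        (volume : Measure (EuclideanSpace ℝ (Fin N)))).lintegral_comp_emb
        (Homeomorph.measurableEmbedding _)
        (fun z : sphere (0:EuclideanSpace ℝ (Fin N)) 1 × Ioi (0:ℝ) => f z.2)]
    refine lintegral_congr fun x => ?_
    simp
  have h3 : ∫⁻ z : sphere (0:EuclideanSpace ℝ (Fin N)) 1 × Ioi (0:ℝ), f z.2
          ∂((volume : Measure (EuclideanSpace ℝ (Fin N))).toSphere.prod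
            (.volumeIoiPow (Module.finrank ℝ (EuclideanSpace ℝ (Fin N)) - 1)))
      = (volume : Measure (EuclideanSpace ℝ (Fin N))).toSphere univ *
          ∫⁻ y : Ioi (0:ℝ), f y
            ∂(Measure.volumeIoiPow (Module.finrank ℝ (EuclideanSpace ℝ (Fin N)) - 1)) := by
    rw [lintegral_prod (fun z : sphere (0:EuclideanSpace ℝ (Fin N)) 1 × Ioi (0:ℝ) => f z.2)
      ((hf.comp (measurable_subtype_coe.comp measurable_snd)).aemeasurable)]
    simp [lintegral_const, mul_comm]
  have h4 : ∫⁻ y : Ioi (0:ℝ), f y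
        ∂(Measure.volumeIoiPow (Module.finrank ℝ (EuclideanSpace ℝ (Fin N)) - 1))
      = ∫⁻ y in Ioi (0:ℝ), ENNReal.ofReal (y ^ (N - 1)) * f y := by
    rw [Measure.volumeIoiPow, lintegral_withDensity_eq_lintegral_mul _
      ((measurable_subtype_coe.pow_const _).ennreal_ofReal)
      (g := fun y : Ioi (0:ℝ) => f y) (hf.comp measurable_subtype_coe)]
    rw [hdim, ← lintegral_subtype_comap measurableSet_Ioi
      (fun y : ℝ => ENNReal.ofReal (y ^ (N - 1)) * f y)]
    rfl
  rw [← h1, h2, h3, h4]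

lemma sigma_ne_zero (N : ℕ) (hN : 2 ≤ N) :
    (volume : Measure (EuclideanSpace ℝ (Fin N))).toSphere univ ≠ 0 := by
  haveI : Nonempty (Fin N) := ⟨⟨0, by omega⟩⟩
  rw [Measure.toSphere_apply_univ]
  refine mul_ne_zero ?_ (measure_ball_pos _ _ one_pos).ne'
  have hdim : Module.finrank ℝ (EuclideanSpace ℝ (Fin N)) = N := finrank_euclideanSpace_fin
  simp only [ne_eq, Nat.cast_eq_zero, hdim]
  omega

lemma sigma_ne_top (N : ℕ) :
    (volume : Measure (EuclideanSpace ℝ (Fin N))).toSphere univ ≠ ⊤ :=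
  (measure_lt_top _ _).ne

lemma holder_piece (N : ℕ) (hN : 2 ≤ N) (t : ℝ) (ht : 1 < t) (htN : t < N) :
    ∃ K : ℝ≥0∞, K ≠ 0 ∧ K ≠ ∞ ∧ ∀ r : ℝ, 1 ≤ r →
      ∀ φ : EuclideanSpace ℝ (Fin N) → ℝ≥0∞, AEMeasurable φ volume →
      ∫⁻ x, φ x * ({y : EuclideanSpace ℝ (Fin N) | r < ‖y‖}.indicator
          (fun y => ENNReal.ofReal (‖y‖ ^ ((1:ℝ) - N))) x) ≤
        (∫⁻ x, φ x ^ t) ^ (1/t) * (K * ENNReal.ofReal (r ^ (-(((N:ℝ) - t)/t)))) := by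
  have ht0 : (0:ℝ) < t := lt_trans one_pos ht
  have ht1 : t - 1 ≠ 0 := sub_ne_zero.2 (ne_of_gt ht)
  set t' : ℝ := t / (t - 1) with ht'def
  have hconj : t.HolderConjugate t' := Real.HolderConjugate.conjExponent ht
  have ht'0 : 0 < t' := hconj.symm.pos
  set a : ℝ := ((N:ℝ) - 1) + ((1:ℝ) - N) * t' with hadef
  have hNR : (1:ℝ) < N := by
    have : (2:ℝ) ≤ N := by exact_mod_cast hN
    linarith
  have ht'eq : t' * (t - 1) = t := by rw [ht'def]; field_simp
  have ha : a < -1 := by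
    have h3 : (N:ℝ) < ((N:ℝ) - 1) * t' := by
      have h5 : (((N:ℝ) - 1) * t') * (t - 1) = ((N:ℝ) - 1) * t := by
        rw [mul_assoc, ht'eq]
      have h4 : (N:ℝ) * (t - 1) < (((N:ℝ) - 1) * t') * (t - 1) := by
        rw [h5]; nlinarith
      exact (mul_lt_mul_iff_left₀ (by linarith : (0:ℝ) < t - 1)).1 h4
    nlinarith [h3]
  have ha1 : a + 1 ≠ 0 := by linarith
  set c : ℝ := (-(a+1))⁻¹ with hcdef
  have hc0 : 0 < c := by
    rw [hcdef]
    have : 0 < -(a+1) := by linarith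
    positivity
  set σ : ℝ≥0∞ := (volume : Measure (EuclideanSpace ℝ (Fin N))).toSphere univ with hσdef
  have hbase0 : σ * ENNReal.ofReal c ≠ 0 :=
    mul_ne_zero (sigma_ne_zero N hN) (ENNReal.ofReal_pos.2 hc0).ne'
  have hbaset : σ * ENNReal.ofReal c ≠ ⊤ :=
    ENNReal.mul_ne_top (sigma_ne_top N) ENNReal.ofReal_ne_top
  refine ⟨(σ * ENNReal.ofReal c) ^ (1/t'), ?_, ?_, ?_⟩
  · intro hK
    rw [ENNReal.rpow_eq_zero_iff] at hK
    rcases hK with ⟨h1, -⟩ | ⟨h1, -⟩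
    · exact hbase0 h1
    · exact hbaset h1
  · exact ENNReal.rpow_ne_top_of_nonneg (by positivity) hbaset
  intro r hr φ hφ
  have hr0 : (0:ℝ) < r := lt_of_lt_of_le one_pos hr
  set G : EuclideanSpace ℝ (Fin N) → ℝ≥0∞ :=
    {y : EuclideanSpace ℝ (Fin N) | r < ‖y‖}.indicator
      (fun y => ENNReal.ofReal (‖y‖ ^ ((1:ℝ) - N))) with hGdef
  have hsm : MeasurableSet {y : EuclideanSpace ℝ (Fin N) | r < ‖y‖} :=
    measurableSet_lt measurable_const measurable_norm
  have hGmeas : Measurable G :=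
    (measurable_norm.pow_const _ |>.ennreal_ofReal).indicator hsm
  have hH := ENNReal.lintegral_mul_le_Lp_mul_Lq volume hconj hφ hGmeas.aemeasurable
  simp only [Pi.mul_apply] at hH
  refine le_trans hH ?_
  refine mul_le_mul_right (le_of_eq ?_) _
  have hkey : ∀ x : EuclideanSpace ℝ (Fin N), G x ^ t' =
      (Ioi r).indicator (fun s => ENNReal.ofReal (s ^ (((1:ℝ) - N) * t'))) ‖x‖ := by
    intro x
    by_cases hx : r < ‖x‖
    · have hx0 : (0:ℝ) < ‖x‖ := lt_trans hr0 hx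
      rw [hGdef]
      rw [Set.indicator_of_mem (by exact hx), Set.indicator_of_mem (by exact hx)]
      rw [Real.rpow_mul (norm_nonneg x), ENNReal.ofReal_rpow_of_pos (Real.rpow_pos_of_pos hx0 _)]
    · rw [hGdef, Set.indicator_of_notMem (by exact hx), Set.indicator_of_notMem (by exact hx)]
      exact ENNReal.zero_rpow_of_pos ht'0
  have hpolar : ∫⁻ x : EuclideanSpace ℝ (Fin N), G x ^ t' =
      σ * ∫⁻ y in Ioi (0:ℝ), ENNReal.ofReal (y ^ (N - 1)) *
        (Ioi r).indicator (fun s => ENNReal.ofReal (s ^ (((1:ℝ) - N) * t'))) y := by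
    rw [lintegral_congr hkey]
    exact polar_lintegral N hN _
      ((measurable_id.pow_const _ |>.ennreal_ofReal).indicator measurableSet_Ioi)
  have hinner : ∫⁻ y in Ioi (0:ℝ), ENNReal.ofReal (y ^ (N - 1)) *
        (Ioi r).indicator (fun s => ENNReal.ofReal (s ^ (((1:ℝ) - N) * t'))) y
      = ∫⁻ y in Ioi r, ENNReal.ofReal (y ^ a) := by
    have step1 : ∀ y : ℝ, ENNReal.ofReal (y ^ (N - 1)) *
          (Ioi r).indicator (fun s => ENNReal.ofReal (s ^ (((1:ℝ) - N) * t'))) y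
        = (Ioi r).indicator (fun y => ENNReal.ofReal (y ^ (N - 1)) *
            ENNReal.ofReal (y ^ (((1:ℝ) - N) * t'))) y := by
      intro y
      by_cases hy : y ∈ Ioi r
      · rw [Set.indicator_of_mem hy, Set.indicator_of_mem hy]
      · rw [Set.indicator_of_notMem hy, Set.indicator_of_notMem hy, mul_zero]
    rw [lintegral_congr step1, lintegral_indicator measurableSet_Ioi _,
      Measure.restrict_restrict measurableSet_Ioi,
      inter_eq_self_of_subset_left (Ioi_subset_Ioi hr0.le)]
    refine setLIntegral_congr_fun measurableSet_Ioi ?_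
    intro y hy
    beta_reduce
    have hy0 : (0:ℝ) < y := lt_trans hr0 hy
    rw [← ENNReal.ofReal_mul (by positivity)]
    congr 1
    rw [← Real.rpow_natCast y (N - 1), ← Real.rpow_add hy0]
    congr 1
    have : ((N - 1 : ℕ) : ℝ) = (N:ℝ) - 1 := by
      have : (1:ℕ) ≤ N := by omega
      push_cast [this]
      ring
    rw [this, hadef]
  have hval : ∫⁻ y in Ioi r, ENNReal.ofReal (y ^ a) =
      ENNReal.ofReal (r ^ (a+1) * c) := by
    rw [← ofReal_integral_eq_lintegral_ofReal (integrableOn_Ioi_rpow_of_lt ha hr0)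
      ((ae_restrict_iff' measurableSet_Ioi).2 (Filter.Eventually.of_forall
        (fun y hy => Real.rpow_nonneg (le_of_lt (lt_trans hr0 hy)) _)))]
    rw [integral_Ioi_rpow_of_lt ha hr0]
    rw [hcdef, ← div_eq_mul_inv, div_neg, neg_div]
  rw [hpolar, hinner, hval, ENNReal.ofReal_mul (by positivity)]
  rw [show σ * (ENNReal.ofReal (r ^ (a+1)) * ENNReal.ofReal c)
      = (σ * ENNReal.ofReal c) * ENNReal.ofReal (r ^ (a+1)) by ring]
  rw [ENNReal.mul_rpow_of_nonneg _ _ (by positivity)]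
  congr 1
  rw [ENNReal.ofReal_rpow_of_pos (Real.rpow_pos_of_pos hr0 _), ← Real.rpow_mul hr0.le]
  congr 1
  rw [hadef, ht'def]
  field_simp
  ring

lemma fderiv_norm_radial {N : ℕ} (u : EuclideanSpace ℝ (Fin N) → ℝ)
    (hu : ContDiff ℝ (⊤ : ℕ∞) u)
    (hrad : ∀ x y : EuclideanSpace ℝ (Fin N), ‖x‖ = ‖y‖ → u x = u y)
    (z y : EuclideanSpace ℝ (Fin N)) (h : ‖z‖ = ‖y‖) :
    ‖fderiv ℝ u z‖ = ‖fderiv ℝ u y‖ := by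
  set Q : EuclideanSpace ℝ (Fin N) ≃ₗᵢ[ℝ] EuclideanSpace ℝ (Fin N) :=
    Submodule.reflection (ℝ ∙ (z - y))ᗮ with hQ
  have hQz : Q z = y := Submodule.reflection_sub h
  have hcomp : u ∘ Q = u := funext fun t => hrad _ _ (Q.norm_map t)
  have h1 : HasFDerivAt u
      ((fderiv ℝ u (Q z)).comp Q.toLinearIsometry.toContinuousLinearMap) z := by
    have h2 := ((hu.differentiable (by simp) (Q z)).hasFDerivAt).comp z
      (Q.toLinearIsometry.toContinuousLinearMap.hasFDerivAt (x := z))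
    rwa [hcomp] at h2
  rw [h1.fderiv]
  exact (ContinuousLinearMap.opNorm_comp_linearIsometryEquiv _ Q).trans (by rw [hQz])

lemma ray_bound {N : ℕ} (u : EuclideanSpace ℝ (Fin N) → ℝ)
    (hu : ContDiff ℝ (⊤ : ℕ∞) u) (hsupp : HasCompactSupport u)
    (e : EuclideanSpace ℝ (Fin N)) (he : ‖e‖ = 1) (r : ℝ) (hr : 0 ≤ r) :
    ENNReal.ofReal |u (r • e)| ≤
      ∫⁻ s in Ioi r, ENNReal.ofReal ‖fderiv ℝ u (s • e)‖ := by
  obtain ⟨R, hR⟩ := (isBounded_iff_subset_closedBall 0).1 hsupp.isBounded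
  set R₀ : ℝ := max (r + 1) (R + 1) with hR₀
  have hrR : r ≤ R₀ := le_trans (by linarith) (le_max_left _ _)
  have hu0 : u (R₀ • e) = 0 := by
    apply image_eq_zero_of_notMem_tsupport
    intro hmem
    have := hR hmem
    rw [mem_closedBall, dist_zero_right, norm_smul, he, mul_one, Real.norm_of_nonneg
      (by positivity : (0:ℝ) ≤ R₀)] at this
    have : R + 1 ≤ R := le_trans (le_max_right (r+1) (R+1)) this
    linarith
  set g : ℝ → ℝ := fun s => u (s • e) with hg
  set φ : ℝ → ℝ := fun s => fderiv ℝ u (s • e) e with hφ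
  have hder : ∀ s : ℝ, HasDerivAt g (φ s) s := by
    intro s
    have h1 : HasDerivAt (fun t : ℝ => t • e) e s := by
      simpa using (hasDerivAt_id s).smul_const e
    exact ((hu.differentiable (by simp) (s • e)).hasFDerivAt).comp_hasDerivAt s h1
  have hφc : Continuous φ :=
    ((hu.continuous_fderiv (by simp)).comp (continuous_id.smul continuous_const)).clm_apply
      continuous_const
  have hHc : Continuous fun s : ℝ => ‖fderiv ℝ u (s • e)‖ :=
    ((hu.continuous_fderiv (by simp)).comp (continuous_id.smul continuous_const)).norm
  have hFTC : ∫ s in r..R₀, φ s = g R₀ - g r :=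
    intervalIntegral.integral_eq_sub_of_hasDerivAt (fun t _ => hder t)
      (hφc.intervalIntegrable r R₀)
  have hreal : |u (r • e)| ≤ ∫ s in r..R₀, ‖fderiv ℝ u (s • e)‖ := by
    have h1 : |u (r • e)| = ‖∫ s in r..R₀, φ s‖ := by
      rw [hFTC]
      show |u (r • e)| = ‖u (R₀ • e) - u (r • e)‖
      rw [hu0, zero_sub, norm_neg, Real.norm_eq_abs]
    rw [h1]
    refine le_trans (intervalIntegral.norm_integral_le_integral_norm hrR) ?_
    refine intervalIntegral.integral_mono_on hrR (hφc.norm.intervalIntegrable r R₀)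
      (hHc.intervalIntegrable r R₀) ?_
    intro s _
    calc ‖φ s‖ ≤ ‖fderiv ℝ u (s • e)‖ * ‖e‖ := (fderiv ℝ u (s • e)).le_opNorm e
      _ = ‖fderiv ℝ u (s • e)‖ := by rw [he, mul_one]
  refine le_trans (ENNReal.ofReal_le_ofReal hreal) ?_
  rw [intervalIntegral.integral_of_le hrR,
    ofReal_integral_eq_lintegral_ofReal (hHc.integrableOn_Ioc)
      (Filter.Eventually.of_forall (fun s => norm_nonneg _))]
  exact lintegral_mono_set Ioc_subset_Ioi_self

lemma radial_step {N : ℕ} (hN : 2 ≤ N) (u : EuclideanSpace ℝ (Fin N) → ℝ)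
    (hu : ContDiff ℝ (⊤ : ℕ∞) u)
    (hrad : ∀ x y : EuclideanSpace ℝ (Fin N), ‖x‖ = ‖y‖ → u x = u y)
    (e : EuclideanSpace ℝ (Fin N)) (he : ‖e‖ = 1) (r : ℝ) (hr : 1 ≤ r) :
    ∫⁻ y : EuclideanSpace ℝ (Fin N), (‖gradient u y‖₊ : ℝ≥0∞) *
        ({z : EuclideanSpace ℝ (Fin N) | r < ‖z‖}.indicator
          (fun z => ENNReal.ofReal (‖z‖ ^ ((1:ℝ) - N))) y)
      = (volume : Measure (EuclideanSpace ℝ (Fin N))).toSphere univ *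
          ∫⁻ s in Ioi r, ENNReal.ofReal ‖fderiv ℝ u (s • e)‖ := by
  have hr0 : (0:ℝ) < r := lt_of_lt_of_le one_pos hr
  have hgrad_norm : ∀ y : EuclideanSpace ℝ (Fin N), ‖gradient u y‖ = ‖fderiv ℝ u y‖ := by
    intro y
    unfold gradient
    exact LinearIsometryEquiv.norm_map _ _
  have hHc : Continuous fun s : ℝ => ‖fderiv ℝ u (s • e)‖ :=
    ((hu.continuous_fderiv (by simp)).comp (continuous_id.smul continuous_const)).norm
  set f₁ : ℝ → ℝ≥0∞ := (Ioi r).indicator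
    (fun s => ENNReal.ofReal (‖fderiv ℝ u (s • e)‖ * s ^ ((1:ℝ) - N))) with hf₁
  have hf₁meas : Measurable f₁ :=
    ((hHc.measurable.mul (measurable_id.pow_const _)).ennreal_ofReal).indicator measurableSet_Ioi
  have hpt : ∀ y : EuclideanSpace ℝ (Fin N), f₁ ‖y‖ =
      (‖gradient u y‖₊ : ℝ≥0∞) * ({z : EuclideanSpace ℝ (Fin N) | r < ‖z‖}.indicator
        (fun z => ENNReal.ofReal (‖z‖ ^ ((1:ℝ) - N))) y) := by
    intro y
    by_cases hy : r < ‖y‖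
    · have hy0 : (0:ℝ) < ‖y‖ := lt_trans hr0 hy
      rw [hf₁, Set.indicator_of_mem (by exact hy), Set.indicator_of_mem (by exact hy)]
      rw [ENNReal.ofReal_mul (norm_nonneg _)]
      congr 1
      have hnorm : ‖(‖y‖ • e : EuclideanSpace ℝ (Fin N))‖ = ‖y‖ := by
        rw [norm_smul, he, mul_one, Real.norm_of_nonneg (norm_nonneg y)]
      rw [fderiv_norm_radial u hu hrad (‖y‖ • e) y hnorm, ← hgrad_norm y]
      exact ofReal_norm_eq_enorm _
    · rw [hf₁, Set.indicator_of_notMem (by exact hy), Set.indicator_of_notMem (by exact hy),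
        mul_zero]
  rw [← lintegral_congr hpt]
  rw [polar_lintegral N hN f₁ hf₁meas]
  congr 1
  have step1 : ∀ y : ℝ, ENNReal.ofReal (y ^ (N - 1)) * f₁ y
      = (Ioi r).indicator (fun y => ENNReal.ofReal (y ^ (N - 1)) *
          ENNReal.ofReal (‖fderiv ℝ u (y • e)‖ * y ^ ((1:ℝ) - N))) y := by
    intro y
    by_cases hy : y ∈ Ioi r
    · rw [hf₁, Set.indicator_of_mem hy, Set.indicator_of_mem hy]
    · rw [hf₁, Set.indicator_of_notMem hy, Set.indicator_of_notMem hy, mul_zero]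
  rw [lintegral_congr step1, lintegral_indicator measurableSet_Ioi _,
    Measure.restrict_restrict measurableSet_Ioi,
    inter_eq_self_of_subset_left (Ioi_subset_Ioi hr0.le)]
  refine setLIntegral_congr_fun measurableSet_Ioi ?_
  intro y hy
  beta_reduce
  have hy0 : (0:ℝ) < y := lt_trans hr0 hy
  rw [ENNReal.ofReal_mul (norm_nonneg _), ← mul_assoc,
    mul_comm (ENNReal.ofReal (y ^ (N - 1))) (ENNReal.ofReal ‖fderiv ℝ u (y • e)‖), mul_assoc,
    ← ENNReal.ofReal_mul (by positivity)]
  have hone : y ^ (N - 1) * y ^ ((1:ℝ) - N) = 1 := by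
    rw [← Real.rpow_natCast y (N - 1), ← Real.rpow_add hy0]
    have : ((N - 1 : ℕ) : ℝ) + ((1:ℝ) - N) = 0 := by
      have h1 : (1:ℕ) ≤ N := by omega
      push_cast [h1]
      ring
    rw [this, Real.rpow_zero]
  rw [hone, ENNReal.ofReal_one, mul_one]

end Auxiliary

/-- radial decay estimate. For `N ≥ 2` and `1 < p < q < N`, there is
`C > 0` such that for every radially symmetric `u ∈ C_c^∞(ℝ^N)` and every `x` with
`|x| ≥ 1`, `|u x| ≤ C |x|^{-(N-q)/q} ‖∇u‖_{p,q}`. -/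
theorem radial_decay_estimate
    (N : ℕ) (hN : 2 ≤ N) (p q : ℝ) (hp : 1 < p) (hpq : p < q) (hqN : q < N) :
    ∃ C : ℝ≥0, 0 < C ∧ ∀ u : EuclideanSpace ℝ (Fin N) → ℝ,
      ContDiff ℝ (⊤ : ℕ∞) u → HasCompactSupport u →
      (∀ x y : EuclideanSpace ℝ (Fin N), ‖x‖ = ‖y‖ → u x = u y) →
      ∀ x : EuclideanSpace ℝ (Fin N), 1 ≤ ‖x‖ →
        ENNReal.ofReal |u x| ≤
          C * ENNReal.ofReal (‖x‖ ^ (-((N : ℝ) - q) / q)) *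
            sumLpNorm (ENNReal.ofReal p) (ENNReal.ofReal q) volume (gradient u) := by
  have hq1 : 1 < q := lt_trans hp hpq
  have hp0 : (0:ℝ) < p := lt_trans one_pos hp
  have hq0 : (0:ℝ) < q := lt_trans one_pos hq1
  have hpN : p < N := lt_trans hpq hqN
  obtain ⟨Kp, hKp0, hKpt, hKp⟩ := holder_piece N hN p hp hpN
  obtain ⟨Kq, hKq0, hKqt, hKq⟩ := holder_piece N hN q hq1 hqN
  set σ : ℝ≥0∞ := (volume : Measure (EuclideanSpace ℝ (Fin N))).toSphere univ with hσ
  set C₀ : ℝ≥0∞ := σ⁻¹ * (Kp + Kq) with hC₀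
  have hC₀0 : C₀ ≠ 0 := mul_ne_zero (ENNReal.inv_ne_zero.2 (sigma_ne_top N))
    (fun h => hKp0 (add_eq_zero.1 h).1)
  have hC₀t : C₀ ≠ ⊤ := ENNReal.mul_ne_top (ENNReal.inv_ne_top.2 (sigma_ne_zero N hN))
    (ENNReal.add_ne_top.2 ⟨hKpt, hKqt⟩)
  refine ⟨C₀.toNNReal, ENNReal.toNNReal_pos hC₀0 hC₀t, ?_⟩
  intro u hu hsupp hrad x hx
  rw [sumLpNorm, ENNReal.coe_toNNReal hC₀t]
  have hr0 : (0:ℝ) < ‖x‖ := lt_of_lt_of_le one_pos hx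
  set r : ℝ := ‖x‖ with hrdef
  set e : EuclideanSpace ℝ (Fin N) := EuclideanSpace.single (⟨0, by omega⟩ : Fin N) (1:ℝ)
    with hedef
  have he : ‖e‖ = 1 := by rw [hedef, EuclideanSpace.norm_single]; norm_num
  set G : EuclideanSpace ℝ (Fin N) → ℝ≥0∞ :=
    {z : EuclideanSpace ℝ (Fin N) | r < ‖z‖}.indicator
      (fun z => ENNReal.ofReal (‖z‖ ^ ((1:ℝ) - N))) with hGdef
  have hGmeas : Measurable G :=
    (measurable_norm.pow_const _ |>.ennreal_ofReal).indicator
      (measurableSet_lt measurable_const measurable_norm)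
  have hux : u x = u (r • e) := hrad _ _ (by
    rw [norm_smul, he, mul_one, Real.norm_of_nonneg hr0.le])
  have stepA : ENNReal.ofReal |u x| ≤
      σ⁻¹ * ∫⁻ y, (‖gradient u y‖₊ : ℝ≥0∞) * G y := by
    rw [hGdef, radial_step hN u hu hrad e he r hx, ← mul_assoc,
      ENNReal.inv_mul_cancel (sigma_ne_zero N hN) (sigma_ne_top N), one_mul, hux]
    exact ray_bound u hu hsupp e he r hr0.le
  set A : ℝ≥0∞ := ENNReal.ofReal (r ^ (-((N:ℝ) - q) / q)) with hAdef
  have hA0 : A ≠ 0 := (ENNReal.ofReal_pos.2 (Real.rpow_pos_of_pos hr0 _)).ne'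
  have hAt : A ≠ ⊤ := ENNReal.ofReal_ne_top
  set b : ℝ≥0∞ := C₀ * A with hbdef
  have hb0 : b ≠ 0 := mul_ne_zero hC₀0 hA0
  have hbt : b ≠ ⊤ := ENNReal.mul_ne_top hC₀t hAt
  have key : ∀ m ∈ {r' : ℝ≥0∞ | ∃ v w : EuclideanSpace ℝ (Fin N) → EuclideanSpace ℝ (Fin N),
        gradient u =ᵐ[volume] v + w ∧ MemLp v (ENNReal.ofReal p) volume ∧
        MemLp w (ENNReal.ofReal q) volume ∧
        r' = eLpNorm v (ENNReal.ofReal p) volume + eLpNorm w (ENNReal.ofReal q) volume},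
      ENNReal.ofReal |u x| ≤ b * m := by
    rintro m ⟨v, w, hvw, hv, hw, rfl⟩
    have hvmeas : AEMeasurable (fun y => (‖v y‖₊ : ℝ≥0∞)) volume :=
      hv.aestronglyMeasurable.enorm
    have hwmeas : AEMeasurable (fun y => (‖w y‖₊ : ℝ≥0∞)) volume :=
      hw.aestronglyMeasurable.enorm
    have hae : ∀ᵐ y ∂(volume : Measure (EuclideanSpace ℝ (Fin N))),
        (‖gradient u y‖₊ : ℝ≥0∞) * G y ≤
          (‖v y‖₊ : ℝ≥0∞) * G y + (‖w y‖₊ : ℝ≥0∞) * G y := by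
      filter_upwards [hvw] with y hy
      rw [← add_mul]
      refine mul_le_mul_left ?_ _
      rw [hy]
      calc ((‖(v + w) y‖₊ : ℝ≥0∞)) = ((‖v y + w y‖₊ : ℝ≥0∞)) := rfl
        _ ≤ _ := by exact_mod_cast nnnorm_add_le _ _
    have hsplit : ∫⁻ y, (‖gradient u y‖₊ : ℝ≥0∞) * G y ≤
        (∫⁻ y, (‖v y‖₊ : ℝ≥0∞) * G y) + ∫⁻ y, (‖w y‖₊ : ℝ≥0∞) * G y :=
      le_trans (lintegral_mono_ae hae)
        (le_of_eq (lintegral_add_left' (hvmeas.mul hGmeas.aemeasurable) _))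
    have hLp : (∫⁻ y, (‖v y‖₊ : ℝ≥0∞) ^ p) ^ (1/p) = eLpNorm v (ENNReal.ofReal p) volume := by
      rw [eLpNorm_eq_lintegral_rpow_enorm_toReal (ENNReal.ofReal_pos.2 hp0).ne' ENNReal.ofReal_ne_top,
        ENNReal.toReal_ofReal hp0.le]; rfl
    have hLq : (∫⁻ y, (‖w y‖₊ : ℝ≥0∞) ^ q) ^ (1/q) = eLpNorm w (ENNReal.ofReal q) volume := by
      rw [eLpNorm_eq_lintegral_rpow_enorm_toReal (ENNReal.ofReal_pos.2 hq0).ne' ENNReal.ofReal_ne_top,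
        ENNReal.toReal_ofReal hq0.le]; rfl
    have hAq : ENNReal.ofReal (r ^ (-(((N:ℝ) - q)/q))) = A := by
      rw [hAdef, neg_div]
    have hmono : ENNReal.ofReal (r ^ (-(((N:ℝ) - p)/p))) ≤ A := by
      rw [← hAq]
      apply ENNReal.ofReal_le_ofReal
      apply Real.rpow_le_rpow_of_exponent_le hx
      rw [neg_le_neg_iff, div_le_div_iff₀ hq0 hp0]
      nlinarith
    have hHp : ∫⁻ y, (‖v y‖₊ : ℝ≥0∞) * G y ≤
        eLpNorm v (ENNReal.ofReal p) volume * (Kp * A) := by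
      refine le_trans (hKp r hx (fun y => (‖v y‖₊ : ℝ≥0∞)) hvmeas) ?_
      rw [hLp]
      exact mul_le_mul_right (mul_le_mul_right hmono _) _
    have hHq : ∫⁻ y, (‖w y‖₊ : ℝ≥0∞) * G y ≤
        eLpNorm w (ENNReal.ofReal q) volume * (Kq * A) := by
      refine le_trans (hKq r hx (fun y => (‖w y‖₊ : ℝ≥0∞)) hwmeas) ?_
      rw [hLq, hAq]
    set Lv := eLpNorm v (ENNReal.ofReal p) volume with hLv
    set Lw := eLpNorm w (ENNReal.ofReal q) volume with hLw
    calc ENNReal.ofReal |u x|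
        ≤ σ⁻¹ * ∫⁻ y, (‖gradient u y‖₊ : ℝ≥0∞) * G y := stepA
      _ ≤ σ⁻¹ * ((∫⁻ y, (‖v y‖₊ : ℝ≥0∞) * G y) + ∫⁻ y, (‖w y‖₊ : ℝ≥0∞) * G y) :=
          mul_le_mul_right hsplit _
      _ ≤ σ⁻¹ * (Lv * (Kp * A) + Lw * (Kq * A)) :=
          mul_le_mul_right (add_le_add hHp hHq) _
      _ ≤ σ⁻¹ * ((Lv + Lw) * ((Kp + Kq) * A)) := by
          refine mul_le_mul_right ?_ _
          rw [add_mul]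
          refine add_le_add ?_ ?_
          · exact mul_le_mul_right (mul_le_mul_left le_self_add _) _
          · exact mul_le_mul_right (mul_le_mul_left le_add_self _) _
      _ = b * (Lv + Lw) := by rw [hbdef, hC₀]; ring
  have h1 : ENNReal.ofReal |u x| / b ≤ sInf {r' : ℝ≥0∞ |
      ∃ v w : EuclideanSpace ℝ (Fin N) → EuclideanSpace ℝ (Fin N),
        gradient u =ᵐ[volume] v + w ∧ MemLp v (ENNReal.ofReal p) volume ∧
        MemLp w (ENNReal.ofReal q) volume ∧
        r' = eLpNorm v (ENNReal.ofReal p) volume + eLpNorm w (ENNReal.ofReal q) volume} :=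
    le_sInf fun m hm => (ENNReal.div_le_iff_le_mul (Or.inl hb0) (Or.inl hbt)).2
      (by rw [mul_comm]; exact key m hm)
  have h2 := (ENNReal.div_le_iff_le_mul (Or.inl hb0) (Or.inl hbt)).1 h1
  rw [mul_comm] at h2
  exact h2
end

section
/- Let N ≥ 2, 1 < p < q < N with p < N, and let C > 0. Let φ: [0, ∞) → [0, ∞) satisfy φ(t) ≤ C t^{p/2} for all t ≥ 1 and φ(t) ≤ C t^{q/2} for all 0 ≤ t ≤ 1. Let G: ℝ → ℝ be continuous with G(0) = 0, and let z ∈ C_c^∞(ℝ^N) be such that ∫_{ℝ^N} G(z(x)) dx > 0. For l > 0 set z_l(x) = z(x/l). Then for all sufficiently large l > 0 one has (1/2)∫_{ℝ^N} φ(|∇z_l(x)|²) dx − ∫_{ℝ^N} G(z_l(x)) dx < 0. -/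
open MeasureTheory Filter Set
open scoped Topology

/-- mountain pass geometry at infinity. Under the upper bounds (Φ3) on
`φ`, if `z ∈ C_c^∞(ℝ^N)` has `∫ G(z) > 0`, then the rescalings `z_l(x) = z(x/l)`
satisfy `J(z_l) = (1/2)∫ φ(|∇z_l|²) - ∫ G(z_l) < 0` for all sufficiently large `l`. -/
theorem action_negative_for_large_dilations
    (N : ℕ) (hN : 2 ≤ N) (p q C : ℝ) (hp : 1 < p) (hpq : p < q) (hqN : q < N) (hC : 0 < C)
    (φ : ℝ → ℝ) (hφnn : ∀ t : ℝ, 0 ≤ t → 0 ≤ φ t)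
    (hφ1 : ∀ t : ℝ, 1 ≤ t → φ t ≤ C * t ^ (p / 2))
    (hφ2 : ∀ t : ℝ, t ∈ Icc (0:ℝ) 1 → φ t ≤ C * t ^ (q / 2))
    (G : ℝ → ℝ) (hG : Continuous G) (hG0 : G 0 = 0)
    (z : EuclideanSpace ℝ (Fin N) → ℝ) (hz : ContDiff ℝ (⊤ : ℕ∞) z) (hzc : HasCompactSupport z)
    (hzG : 0 < ∫ x : EuclideanSpace ℝ (Fin N), G (z x)) :
    ∃ l₀ : ℝ, 0 < l₀ ∧ ∀ l : ℝ, l₀ ≤ l →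
      (1 / 2) * (∫ x : EuclideanSpace ℝ (Fin N),
          φ (‖gradient (fun y => z (l⁻¹ • y)) x‖ ^ 2)) -
        (∫ x : EuclideanSpace ℝ (Fin N), G (z (l⁻¹ • x))) < 0 := by
  classical
  have hq0 : (0:ℝ) < q := lt_trans (lt_trans zero_lt_one hp) hpq
  have hzd : Differentiable ℝ z := hz.differentiable (by simp)
  set g : EuclideanSpace ℝ (Fin N) → EuclideanSpace ℝ (Fin N) := fun x => gradient z x
    with hgdef
  have hgc : Continuous g :=
    (InnerProductSpace.toDual ℝ (EuclideanSpace ℝ (Fin N))).symm.continuous.comp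
      (hz.continuous_fderiv (by simp))
  have hgs : HasCompactSupport g :=
    (hzc.fderiv ℝ).comp_left
      (g := ⇑(InnerProductSpace.toDual ℝ (EuclideanSpace ℝ (Fin N))).symm) (map_zero _)
  obtain ⟨M, hM⟩ := hgs.exists_bound_of_continuous hgc
  have hM0 : 0 ≤ M := (norm_nonneg _).trans (hM 0)
  set I : ℝ := ∫ x : EuclideanSpace ℝ (Fin N), G (z x) with hIdef
  have hI0 : 0 < I := hzG
  set K : ℝ := ∫ x : EuclideanSpace ℝ (Fin N), ‖g x‖ ^ q with hKdef
  have hK0 : 0 ≤ K := integral_nonneg fun x => Real.rpow_nonneg (norm_nonneg _) q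
  set B : ℝ := C * K / (2 * I) + 1 with hBdef
  have hB0 : 0 ≤ B := by
    have h0 : 0 ≤ C * K / (2 * I) :=
      div_nonneg (mul_nonneg hC.le hK0) (by linarith)
    rw [hBdef]
    linarith
  clear_value g I K B
  refine ⟨max (max 1 M) (B ^ (1/q)),
    lt_of_lt_of_le one_pos (le_max_of_le_left (le_max_left _ _)), ?_⟩
  intro l hl
  have hl1 : (1:ℝ) ≤ l := le_trans (le_trans (le_max_left _ _) (le_max_left _ _)) hl
  have hlpos : 0 < l := lt_of_lt_of_le one_pos hl1
  have hlM : M ≤ l := le_trans (le_trans (le_max_right _ _) (le_max_left _ _)) hl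
  have hlq : 0 < l ^ q := Real.rpow_pos_of_pos hlpos q
  have hlB : B ≤ l ^ q := by
    have h1 : B ^ (1/q) ≤ l := le_trans (le_max_right _ _) hl
    have h2 : ((B ^ (1/q)) ^ q : ℝ) = B := by
      rw [← Real.rpow_mul hB0, one_div, inv_mul_cancel₀ hq0.ne', Real.rpow_one]
    calc B = (B ^ (1/q)) ^ q := h2.symm
      _ ≤ l ^ q := Real.rpow_le_rpow (Real.rpow_nonneg hB0 _) h1 hq0.le
  -- gradient of the rescaled function
  have hgrad : ∀ x : EuclideanSpace ℝ (Fin N),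
      gradient (fun y => z (l⁻¹ • y)) x = l⁻¹ • g (l⁻¹ • x) := by
    intro x
    have h1 : HasFDerivAt (fun y : EuclideanSpace ℝ (Fin N) => l⁻¹ • y)
        ((l⁻¹ : ℝ) • ContinuousLinearMap.id ℝ (EuclideanSpace ℝ (Fin N))) x :=
      (hasFDerivAt_id x).const_smul l⁻¹
    have h2 : HasFDerivAt (fun y : EuclideanSpace ℝ (Fin N) => z (l⁻¹ • y))
        ((l⁻¹ : ℝ) • fderiv ℝ z (l⁻¹ • x)) x := by
      have h3 := (hzd (l⁻¹ • x)).hasFDerivAt.comp x h1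
      refine h3.congr_fderiv ?_
      ext v
      simp
    show (InnerProductSpace.toDual ℝ (EuclideanSpace ℝ (Fin N))).symm
        (fderiv ℝ (fun y => z (l⁻¹ • y)) x) = l⁻¹ • g (l⁻¹ • x)
    rw [h2.fderiv, _root_.map_smul, hgdef]
    rfl
  -- rewrite the φ-integral
  have hint1 : (∫ x : EuclideanSpace ℝ (Fin N), φ (‖gradient (fun y => z (l⁻¹ • y)) x‖ ^ 2))
      = ∫ x : EuclideanSpace ℝ (Fin N), φ ((l⁻¹ * ‖g (l⁻¹ • x)‖) ^ 2) := by
    congr 1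
    funext x
    rw [hgrad x, norm_smul, Real.norm_eq_abs, abs_of_pos (inv_pos.2 hlpos)]
  -- pointwise bound
  have hpoint : ∀ x : EuclideanSpace ℝ (Fin N), φ ((l⁻¹ * ‖g (l⁻¹ • x)‖) ^ 2)
      ≤ C * ((l⁻¹ : ℝ) ^ q * ‖g (l⁻¹ • x)‖ ^ q) := by
    intro x
    set a : ℝ := l⁻¹ * ‖g (l⁻¹ • x)‖ with hadef
    have ha0 : 0 ≤ a := mul_nonneg (inv_nonneg.2 hlpos.le) (norm_nonneg _)
    have ha1 : a ≤ 1 := by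
      have h4 : l⁻¹ * ‖g (l⁻¹ • x)‖ ≤ l⁻¹ * M :=
        mul_le_mul_of_nonneg_left (hM _) (inv_nonneg.2 hlpos.le)
      have h5 : l⁻¹ * M ≤ 1 := by
        rw [inv_mul_le_iff₀ hlpos]
        linarith
      exact le_trans h4 h5
    have h2 : φ (a ^ 2) ≤ C * (a ^ 2) ^ (q/2) :=
      hφ2 _ ⟨sq_nonneg a, pow_le_one₀ ha0 ha1⟩
    have h3 : ((a ^ 2 : ℝ)) ^ (q/2) = a ^ q := by
      rw [← Real.rpow_natCast a 2, ← Real.rpow_mul ha0]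
      congr 1
      push_cast
      ring
    calc φ (a ^ 2) ≤ C * a ^ q := by rw [← h3]; exact h2
      _ = C * ((l⁻¹ : ℝ) ^ q * ‖g (l⁻¹ • x)‖ ^ q) := by
          rw [hadef, Real.mul_rpow (inv_nonneg.2 hlpos.le) (norm_nonneg _)]
  -- integrability of the dominating function
  have hcc : Continuous fun x : EuclideanSpace ℝ (Fin N) => ‖g (l⁻¹ • x)‖ ^ q :=
    ((hgc.comp (continuous_const_smul _)).norm).rpow_const fun x => Or.inr hq0.le
  have hss : HasCompactSupport fun x : EuclideanSpace ℝ (Fin N) => ‖g (l⁻¹ • x)‖ ^ q := by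
    have h6 := ((hgs.comp_smul (inv_ne_zero hlpos.ne')).norm)
    exact h6.comp_left (g := fun t : ℝ => t ^ q) (Real.zero_rpow hq0.ne')
  have hint2 : Integrable
      (fun x : EuclideanSpace ℝ (Fin N) => C * ((l⁻¹ : ℝ) ^ q * ‖g (l⁻¹ • x)‖ ^ q)) :=
    ((hcc.integrable_of_hasCompactSupport hss).const_mul _).const_mul _
  -- integral comparison
  have hintbound : (∫ x : EuclideanSpace ℝ (Fin N), φ ((l⁻¹ * ‖g (l⁻¹ • x)‖) ^ 2))
      ≤ ∫ x : EuclideanSpace ℝ (Fin N), C * ((l⁻¹ : ℝ) ^ q * ‖g (l⁻¹ • x)‖ ^ q) := by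
    by_cases hf : Integrable
        (fun x : EuclideanSpace ℝ (Fin N) => φ ((l⁻¹ * ‖g (l⁻¹ • x)‖) ^ 2))
    · exact integral_mono hf hint2 hpoint
    · rw [integral_undef hf]
      exact integral_nonneg fun x => mul_nonneg hC.le
        (mul_nonneg (Real.rpow_nonneg (inv_nonneg.2 hlpos.le) _)
          (Real.rpow_nonneg (norm_nonneg _) _))
  -- change of variables for the dominating integral
  have hchange : (∫ x : EuclideanSpace ℝ (Fin N), C * ((l⁻¹ : ℝ) ^ q * ‖g (l⁻¹ • x)‖ ^ q))
      = (l : ℝ) ^ N * (C * ((l⁻¹ : ℝ) ^ q * K)) := by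
    have h7 := MeasureTheory.Measure.integral_comp_inv_smul_of_nonneg
      (volume : Measure (EuclideanSpace ℝ (Fin N)))
      (fun y => C * ((l⁻¹ : ℝ) ^ q * ‖g y‖ ^ q)) hlpos.le
    simp only [finrank_euclideanSpace_fin, smul_eq_mul] at h7
    rw [h7, integral_const_mul, integral_const_mul, hKdef]
  -- change of variables for the G integral
  have hGchange : (∫ x : EuclideanSpace ℝ (Fin N), G (z (l⁻¹ • x))) = (l : ℝ) ^ N * I := by
    have h8 := MeasureTheory.Measure.integral_comp_inv_smul_of_nonneg
      (volume : Measure (EuclideanSpace ℝ (Fin N))) (fun y => G (z y)) hlpos.le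
    simp only [finrank_euclideanSpace_fin, smul_eq_mul] at h8
    rw [h8, hIdef]
  have hlN : (0:ℝ) < l ^ N := pow_pos hlpos N
  -- key strict inequality
  have hkey : C * ((l⁻¹ : ℝ) ^ q * K) / 2 < I := by
    have h9 : (l⁻¹ : ℝ) ^ q = (l ^ q)⁻¹ := Real.inv_rpow hlpos.le q
    have h10 : C * K / (2 * I) < l ^ q := by
      rw [hBdef] at hlB
      linarith
    have h11 : C * K < l ^ q * (2 * I) := by
      rwa [div_lt_iff₀ (by nlinarith : (0:ℝ) < 2 * I)] at h10
    rw [h9]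
    have h14 : C * ((l ^ q)⁻¹ * K) * l ^ q = C * K := by
      field_simp
    have h15 : C * ((l ^ q)⁻¹ * K) < 2 * I := by
      apply lt_of_mul_lt_mul_right _ hlq.le
      calc C * ((l ^ q)⁻¹ * K) * l ^ q = C * K := h14
        _ < l ^ q * (2 * I) := h11
        _ = 2 * I * l ^ q := by ring
    linarith
  -- conclude
  rw [hint1, hGchange]
  calc (1 / 2) * (∫ x : EuclideanSpace ℝ (Fin N), φ ((l⁻¹ * ‖g (l⁻¹ • x)‖) ^ 2))
        - (l : ℝ) ^ N * I
      ≤ (1 / 2) * ((l : ℝ) ^ N * (C * ((l⁻¹ : ℝ) ^ q * K))) - (l : ℝ) ^ N * I := by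
        have h13 := hintbound.trans_eq hchange
        linarith
    _ = (l : ℝ) ^ N * (C * ((l⁻¹ : ℝ) ^ q * K) / 2 - I) := by ring
    _ < 0 := by
        apply mul_neg_of_pos_of_neg hlN
        linarith
end
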